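/- Let G be a d-regular graph and x ∈ R^n a nonnegative vector with max coordinate 1 and Rayleigh quotient x^T L x / ||x||_2^2 = λ. Then there exists t ∈ (0,1) such that the threshold set S_t = {i : x_i ≥ t} is nonempty and satisfies φ(S_t) ≤ sqrt(λ(2 − λ)). -/

import Mathlib

/-!
Pick the threshold `t ∈ (0, 1]` at random with density `2t`. Then `E |S_t| = ‖x‖²`, and the pair
`(i, j)` is cut by `S_t` exactly when `x_j < t ≤ x_i`, which happens with probability
`(x_i² - x_j²)⁺`. Symmetrising and applying Cauchy–Schwarz to
`|x_i² - x_j²| = |x_i - x_j| |x_i + x_j|` bounds `E cut(S_t)` by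
`½ √(∑ A_ij (x_i - x_j)²) √(∑ A_ij (x_i + x_j)²) = d ‖x‖² √(λ (2 - λ))`,
the two quadratic forms being `2dλ‖x‖²` and `2d(2 - λ)‖x‖²`.
So `cut(S_t) - √(λ (2 - λ)) d |S_t|` has nonpositive mean and is nonpositive for some `t`.
-/

open Finset Matrix MeasureTheory

theorem IntervalIntegrable.indicator {f : ℝ → ℝ} {a b : ℝ}
    (hf : IntervalIntegrable f volume a b) {s : Set ℝ} (hs : MeasurableSet s) :
    IntervalIntegrable (s.indicator f) volume a b :=
  ⟨hf.1.indicator hs, hf.2.indicator hs⟩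

theorem integral_indicator_Ioc_two_mul {a b : ℝ} (hb : 0 ≤ b) (ha : 0 ≤ a) (ha1 : a ≤ 1) :
    ∫ t in (0 : ℝ)..1, (Set.Ioc b a).indicator (fun t => 2 * t) t = max (a ^ 2 - b ^ 2) 0 := by
  rw [intervalIntegral.integral_of_le zero_le_one, setIntegral_indicator measurableSet_Ioc,
    Set.Ioc_inter_Ioc, max_eq_right hb, min_eq_right ha1]
  rcases le_or_gt b a with hba | hab
  · rw [← intervalIntegral.integral_of_le hba, intervalIntegral.integral_const_mul, integral_id,
      max_eq_left (by nlinarith)]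
    ring
  · rw [Set.Ioc_eq_empty_of_le hab.le, Measure.restrict_empty, integral_zero_measure,
      max_eq_right (by nlinarith)]

theorem exists_mem_Ioo_nonpos_of_integral_nonpos {f : ℝ → ℝ} {a b : ℝ} (hab : a < b)
    (hf : IntervalIntegrable f volume a b) (h : ∫ t in a..b, f t ≤ 0) :
    ∃ t ∈ Set.Ioo a b, f t ≤ 0 := by
  by_contra! hpos
  exact h.not_gt (intervalIntegral.intervalIntegral_pos_of_pos_on hf hpos hab)

variable {ι : Type*} [Fintype ι]

section QuadraticForm

variable {A : Matrix ι ι ℝ} {d : ℝ}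

theorem dotProduct_mulVec_eq_of_rayleigh [DecidableEq ι] {x : ι → ℝ} {lam : ℝ} (hd : d ≠ 0)
    (hx : x ≠ 0) (h : (x ⬝ᵥ (1 - d⁻¹ • A) *ᵥ x) / (x ⬝ᵥ x) = lam) :
    x ⬝ᵥ A *ᵥ x = d * (1 - lam) * (x ⬝ᵥ x) := by
  have hxx : x ⬝ᵥ x ≠ 0 := dotProduct_self_eq_zero.not.mpr hx
  rw [sub_mulVec, one_mulVec, smul_mulVec, dotProduct_sub, dotProduct_smul, smul_eq_mul] at h
  rw [← h]
  field_simp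
  ring

theorem sum_sum_mul_sq_left (hreg : ∀ i, ∑ j, A i j = d) (x : ι → ℝ) :
    ∑ i, ∑ j, A i j * x i ^ 2 = d * (x ⬝ᵥ x) := by
  simp only [← Finset.sum_mul, hreg, dotProduct, Finset.mul_sum, sq]

theorem sum_sum_mul_sq_right (hA : A.IsSymm) (hreg : ∀ i, ∑ j, A i j = d) (x : ι → ℝ) :
    ∑ i, ∑ j, A i j * x j ^ 2 = d * (x ⬝ᵥ x) := by
  rw [Finset.sum_comm, ← sum_sum_mul_sq_left hreg]
  simp only [hA.apply]

theorem sum_sum_mul_mul (A : Matrix ι ι ℝ) (x : ι → ℝ) :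
    ∑ i, ∑ j, A i j * (x i * x j) = x ⬝ᵥ A *ᵥ x := by
  simp only [dotProduct, mulVec, Finset.mul_sum]
  exact Finset.sum_congr rfl fun i _ => Finset.sum_congr rfl fun j _ => by ring

theorem sum_sum_mul_sub_sq (hA : A.IsSymm) (hreg : ∀ i, ∑ j, A i j = d) (x : ι → ℝ) :
    ∑ i, ∑ j, A i j * (x i - x j) ^ 2 = 2 * (d * (x ⬝ᵥ x) - x ⬝ᵥ A *ᵥ x) := by
  have h (i j : ι) : A i j * (x i - x j) ^ 2 =
      A i j * x i ^ 2 + A i j * x j ^ 2 - 2 * (A i j * (x i * x j)) := by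
    ring
  simp only [h, Finset.sum_sub_distrib, Finset.sum_add_distrib, ← Finset.mul_sum]
  rw [sum_sum_mul_sq_left hreg, sum_sum_mul_sq_right hA hreg, sum_sum_mul_mul]
  ring

theorem sum_sum_mul_add_sq (hA : A.IsSymm) (hreg : ∀ i, ∑ j, A i j = d) (x : ι → ℝ) :
    ∑ i, ∑ j, A i j * (x i + x j) ^ 2 = 2 * (d * (x ⬝ᵥ x) + x ⬝ᵥ A *ᵥ x) := by
  have h (i j : ι) : A i j * (x i + x j) ^ 2 =
      A i j * x i ^ 2 + A i j * x j ^ 2 + 2 * (A i j * (x i * x j)) := by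
    ring
  simp only [h, Finset.sum_add_distrib, ← Finset.mul_sum]
  rw [sum_sum_mul_sq_left hreg, sum_sum_mul_sq_right hA hreg, sum_sum_mul_mul]
  ring

theorem sum_sum_mul_abs_sq_sub_sq_le (hA : ∀ i j, 0 ≤ A i j) (x : ι → ℝ) :
    ∑ i, ∑ j, A i j * |x i ^ 2 - x j ^ 2| ≤
      √(∑ i, ∑ j, A i j * (x i - x j) ^ 2) * √(∑ i, ∑ j, A i j * (x i + x j) ^ 2) := by
  simp only [← Fintype.sum_prod_type']
  refine le_of_eq_of_le (Finset.sum_congr rfl fun p _ => ?_)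
    (Real.sum_sqrt_mul_sqrt_le _ (fun p => mul_nonneg (hA p.1 p.2) (sq_nonneg _))
      fun p => mul_nonneg (hA p.1 p.2) (sq_nonneg _))
  rw [← Real.sqrt_mul (mul_nonneg (hA p.1 p.2) (sq_nonneg _)),
    show A p.1 p.2 * (x p.1 - x p.2) ^ 2 * (A p.1 p.2 * (x p.1 + x p.2) ^ 2)
      = (A p.1 p.2 * (x p.1 ^ 2 - x p.2 ^ 2)) ^ 2 by ring,
    Real.sqrt_sq_eq_abs, abs_mul, abs_of_nonneg (hA p.1 p.2)]

theorem two_mul_sum_sum_mul_max_sub_eq_abs (hA : A.IsSymm) (y : ι → ℝ) :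
    2 * ∑ i, ∑ j, A i j * max (y i - y j) 0 = ∑ i, ∑ j, A i j * |y i - y j| := by
  conv_lhs => rw [two_mul]; enter [2]; rw [Finset.sum_comm]
  simp only [hA.apply, ← Finset.sum_add_distrib, ← mul_add]
  exact Finset.sum_congr rfl fun i _ => Finset.sum_congr rfl fun j _ => by
    rw [← neg_sub (y i) (y j), max_zero_add_max_neg_zero_eq_abs_self]

theorem sum_sum_mul_max_sq_sub_sq_le (hA : A.IsSymm) (hA0 : ∀ i j, 0 ≤ A i j) (hd : 0 ≤ d)
    (hreg : ∀ i, ∑ j, A i j = d) {x : ι → ℝ} {lam : ℝ}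
    (hq : x ⬝ᵥ A *ᵥ x = d * (1 - lam) * (x ⬝ᵥ x)) :
    ∑ i, ∑ j, A i j * max (x i ^ 2 - x j ^ 2) 0 ≤ √(lam * (2 - lam)) * d * (x ⬝ᵥ x) := by
  have hP : 0 ≤ ∑ i, ∑ j, A i j * (x i - x j) ^ 2 :=
    Finset.sum_nonneg fun i _ => Finset.sum_nonneg fun j _ => mul_nonneg (hA0 i j) (sq_nonneg _)
  have hdx : 0 ≤ d * (x ⬝ᵥ x) := mul_nonneg hd (by simpa using dotProduct_self_star_nonneg x)
  have hcs := sum_sum_mul_abs_sq_sub_sq_le hA0 x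
  rw [← Real.sqrt_mul hP, sum_sum_mul_sub_sq hA hreg, sum_sum_mul_add_sq hA hreg, hq,
    show 2 * (d * (x ⬝ᵥ x) - d * (1 - lam) * (x ⬝ᵥ x)) *
        (2 * (d * (x ⬝ᵥ x) + d * (1 - lam) * (x ⬝ᵥ x)))
      = (2 * (d * (x ⬝ᵥ x))) ^ 2 * (lam * (2 - lam)) by ring,
    Real.sqrt_mul (sq_nonneg _), Real.sqrt_sq (by positivity),
    ← two_mul_sum_sum_mul_max_sub_eq_abs hA fun i => x i ^ 2] at hcs
  linarith

end QuadraticForm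

section Threshold

def cut [DecidableEq ι] (A : Matrix ι ι ℝ) (s : Finset ι) : ℝ := ∑ i ∈ s, ∑ j ∈ sᶜ, A i j

theorem sum_sum_indicator_Ioc_eq_cut [DecidableEq ι] (A : Matrix ι ι ℝ) (x : ι → ℝ) (t : ℝ) :
    ∑ i, ∑ j, A i j * (Set.Ioc (x j) (x i)).indicator (fun u => 2 * u) t =
      2 * t * cut A {i | t ≤ x i} := by
  simp only [cut, Finset.compl_filter, Finset.sum_filter, Finset.mul_sum]
  refine Finset.sum_congr rfl fun i _ => ?_
  split_ifs with hi
  · rw [Finset.mul_sum]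
    refine Finset.sum_congr rfl fun j _ => ?_
    by_cases hj : t ≤ x j
    · simp [hj]
    · simp [hi, not_le.mp hj]; ring
  · rw [mul_zero]
    exact Finset.sum_eq_zero fun j _ => by simp [hi]

theorem sum_indicator_Ioc_zero_eq_card (x : ι → ℝ) {t : ℝ} (ht : 0 < t) :
    ∑ i, (Set.Ioc 0 (x i)).indicator (fun u => 2 * u) t = 2 * t * #{i | t ≤ x i} := by
  simp only [Set.indicator_apply, Set.mem_Ioc, ht, true_and]
  rw [← Finset.sum_filter, Finset.sum_const, nsmul_eq_mul, mul_comm]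

theorem exists_threshold_cut_le_mul_card [DecidableEq ι] (A : Matrix ι ι ℝ) {x : ι → ℝ}
    (hx0 : ∀ i, 0 ≤ x i) (hx1 : ∀ i, x i ≤ 1) {K : ℝ}
    (h : ∑ i, ∑ j, A i j * max (x i ^ 2 - x j ^ 2) 0 ≤ K * (x ⬝ᵥ x)) :
    ∃ t ∈ Set.Ioo (0 : ℝ) 1, cut A {i | t ≤ x i} ≤ K * #{i | t ≤ x i} := by
  set ρ : Set ℝ → ℝ → ℝ := fun s => s.indicator fun t => 2 * t with hρ
  have hρint (a b : ℝ) : IntervalIntegrable (ρ (Set.Ioc a b)) volume 0 1 :=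
    ((continuous_const.mul continuous_id).intervalIntegrable 0 1).indicator measurableSet_Ioc
  have hrow (i : ι) :
      IntervalIntegrable (fun t => ∑ j, A i j * ρ (Set.Ioc (x j) (x i)) t) volume 0 1 := by
    simpa only [Finset.sum_fn] using
      IntervalIntegrable.sum _ fun j _ => (hρint (x j) (x i)).const_mul (A i j)
  have hcut :
      IntervalIntegrable (fun t => ∑ i, ∑ j, A i j * ρ (Set.Ioc (x j) (x i)) t) volume 0 1 := by
    simpa only [Finset.sum_fn] using IntervalIntegrable.sum _ fun i _ => hrow i
  have hcard : IntervalIntegrable (fun t => ∑ i, ρ (Set.Ioc 0 (x i)) t) volume 0 1 := by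
    simpa only [Finset.sum_fn] using IntervalIntegrable.sum _ fun i _ => hρint 0 (x i)
  have hint : ∫ t in (0 : ℝ)..1, (∑ i, ∑ j, A i j * ρ (Set.Ioc (x j) (x i)) t
      - K * ∑ i, ρ (Set.Ioc 0 (x i)) t) =
      ∑ i, ∑ j, A i j * max (x i ^ 2 - x j ^ 2) 0 - K * (x ⬝ᵥ x) := by
    rw [intervalIntegral.integral_sub hcut (hcard.const_mul K),
      intervalIntegral.integral_const_mul]
    congr 1
    · rw [intervalIntegral.integral_finsetSum fun i _ => hrow i]
      refine Finset.sum_congr rfl fun i _ => ?_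
      rw [intervalIntegral.integral_finsetSum fun j _ => (hρint (x j) (x i)).const_mul (A i j)]
      refine Finset.sum_congr rfl fun j _ => ?_
      rw [intervalIntegral.integral_const_mul,
        integral_indicator_Ioc_two_mul (hx0 j) (hx0 i) (hx1 i)]
    · rw [intervalIntegral.integral_finsetSum fun i _ => hρint 0 (x i)]
      simp [hρ, integral_indicator_Ioc_two_mul le_rfl (hx0 _) (hx1 _), dotProduct, sq,
        mul_self_nonneg]
  obtain ⟨t, ht, hgt⟩ := exists_mem_Ioo_nonpos_of_integral_nonpos zero_lt_one
    (hcut.sub (hcard.const_mul K)) (by rw [hint]; linarith)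
  refine ⟨t, ht, ?_⟩
  rw [hρ, sum_sum_indicator_Ioc_eq_cut, sum_indicator_Ioc_zero_eq_card x ht.1] at hgt
  nlinarith [ht.1]

end Threshold

theorem cheeger_rounding_general (n d : ℕ) (hd : 0 < d)
    (A : Matrix (Fin n) (Fin n) ℝ) (hsymm : A.IsSymm)
    (h01 : ∀ i j, A i j = 0 ∨ A i j = 1)
    (hreg : ∀ i, ∑ j, A i j = d)
    (x : Fin n → ℝ) (hpos : ∀ i, 0 ≤ x i) (hle : ∀ i, x i ≤ 1)
    (hmax : ∃ i, x i = 1)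
    (lam : ℝ)
    (hlam : (x ⬝ᵥ (1 - (d : ℝ)⁻¹ • A).mulVec x) / (x ⬝ᵥ x) = lam) :
    ∃ t ∈ Set.Ioo (0 : ℝ) 1,
      ({i | t ≤ x i} : Finset (Fin n)).Nonempty ∧
      (∑ i ∈ ({i | t ≤ x i} : Finset (Fin n)),
          ∑ j ∈ ({i | t ≤ x i} : Finset (Fin n))ᶜ, A i j)
          / (d * ({i | t ≤ x i} : Finset (Fin n)).card)
        ≤ Real.sqrt (lam * (2 - lam)) := by
  obtain ⟨i₀, hi₀⟩ := hmax
  have hA0 (i j : Fin n) : 0 ≤ A i j := by rcases h01 i j with h | h <;> simp [h]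
  have hx : x ≠ 0 := fun h => by simp [h] at hi₀
  have hq := dotProduct_mulVec_eq_of_rayleigh (Nat.cast_ne_zero.mpr hd.ne') hx hlam
  obtain ⟨t, ht, hcut⟩ := exists_threshold_cut_le_mul_card A hpos hle
    (sum_sum_mul_max_sq_sub_sq_le hsymm hA0 (Nat.cast_nonneg d) hreg hq)
  refine ⟨t, ht, ⟨i₀, by simp [hi₀, ht.2.le]⟩,
    div_le_of_le_mul₀ (by positivity) (Real.sqrt_nonneg _) ?_⟩
  rwa [mul_assoc] at hcut

/-- Cheeger rounding: for a nonnegative vector x with maximum coordinate 1 and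
Rayleigh quotient λ with respect to the normalized Laplacian, some threshold
set S_t = {i : x_i ≥ t} is nonempty and has expansion at most sqrt(λ(2−λ)). -/
theorem cheeger_rounding (n d : ℕ) (hd : 0 < d)
    (A : Matrix (Fin n) (Fin n) ℝ) (hsymm : A.IsSymm)
    (h01 : ∀ i j, A i j = 0 ∨ A i j = 1) (hdiag : ∀ i, A i i = 0)
    (hreg : ∀ i, ∑ j, A i j = d)
    (x : Fin n → ℝ) (hpos : ∀ i, 0 ≤ x i) (hle : ∀ i, x i ≤ 1)
    (hmax : ∃ i, x i = 1)
    (lam : ℝ)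
    (hlam : (x ⬝ᵥ (1 - (d : ℝ)⁻¹ • A).mulVec x) / (x ⬝ᵥ x) = lam) :
    ∃ t ∈ Set.Ioo (0 : ℝ) 1,
      ({i | t ≤ x i} : Finset (Fin n)).Nonempty ∧
      (∑ i ∈ ({i | t ≤ x i} : Finset (Fin n)),
          ∑ j ∈ ({i | t ≤ x i} : Finset (Fin n))ᶜ, A i j)
          / (d * ({i | t ≤ x i} : Finset (Fin n)).card)
        ≤ Real.sqrt (lam * (2 - lam)) :=
  cheeger_rounding_general n d hd A hsymm h01 hreg x hpos hle hmax lam hlam
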